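/- Let L' ⊆ ℂ[t,t⁻¹] be the space of Laurent polynomials with zero constant term, and let 𝔰 ⊆ End(L') be the ℂ-linear span of the operators T_{f,g}, for f,g ∈ L', where T_{f,g}(k) = ⟨f,k⟩·g + ⟨g,k⟩·f. Then 𝔰 is closed under the commutator bracket and is perfect: [𝔰, 𝔰] = 𝔰, i.e. every element of 𝔰 is a ℂ-linear combination of commutators of elements of 𝔰. (This is the identity S²(H'_f) = [S²(H'_f), S²(H'_f)] used to prove H¹(sp(H'), ℂ) = 0.) -/

import Mathlib

open HahnSeries

/-- Formal derivative on Laurent series: `(D f).coeff n = (n+1) * f.coeff (n+1)`. -/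
noncomputable def D (f : LaurentSeries ℂ) : LaurentSeries ℂ where
  coeff := fun n => ((n + 1 : ℤ) : ℂ) * f.coeff (n + 1)
  isPWO_support' := by
    have himg : (Function.support fun n : ℤ => ((n + 1 : ℤ) : ℂ) * f.coeff (n + 1)) ⊆
        (fun n : ℤ => n - 1) '' f.support := by
      intro n hn
      have h : f.coeff (n + 1) ≠ 0 := by
        intro h
        simp [Function.mem_support, h] at hn
      exact ⟨n + 1, h, by ring⟩
    exact (f.isPWO_support.image_of_monotone
      (fun a b hab => by simpa using sub_le_sub_right hab 1)).mono himg

/-- The residue pairing `⟨f,g⟩ = -Res_{t=0}(f·g')`, i.e. minus the coefficient of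
`t⁻¹` in `f * D g`. -/
noncomputable def resPair (f g : LaurentSeries ℂ) : ℂ := -((f * D g).coeff (-1))

/-- `L' ⊂ ℂ((t))`: Laurent polynomials with zero constant term, viewed inside the
Laurent series. -/
noncomputable def Lprime : Submodule ℂ (LaurentSeries ℂ) where
  carrier := {f | f.coeff 0 = 0 ∧ f.support.Finite}
  zero_mem' := by
    refine ⟨by simp, ?_⟩
    simp [HahnSeries.support_zero]
  add_mem' := by
    rintro a b ⟨ha0, haf⟩ ⟨hb0, hbf⟩
    refine ⟨by simp [HahnSeries.coeff_add, ha0, hb0], ?_⟩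
    refine Set.Finite.subset (haf.union hbf) ?_
    intro n hn
    simp only [HahnSeries.support, Function.mem_support, HahnSeries.coeff_add,
      Set.mem_union] at hn ⊢
    by_contra h
    push_neg at h
    simp [h.1, h.2] at hn
  smul_mem' := by
    rintro c f ⟨hf0, hff⟩
    refine ⟨by simp [HahnSeries.coeff_smul, hf0], ?_⟩
    refine Set.Finite.subset hff ?_
    intro n hn
    simp only [HahnSeries.support, Function.mem_support, HahnSeries.coeff_smul] at hn ⊢
    intro h
    simp [h] at hn

/-- The operator `T_{f,g} : L' → L'`, `T_{f,g}(k) = ⟨f,k⟩g + ⟨g,k⟩f` (a ℂ-linear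
endomorphism of `L'`). -/
noncomputable def TL (f g : Lprime) (k : Lprime) : Lprime :=
  resPair (f : LaurentSeries ℂ) (k : LaurentSeries ℂ) • g +
    resPair (g : LaurentSeries ℂ) (k : LaurentSeries ℂ) • f

/-- The span `𝔰 ≅ S²(H'_f)` of the operators `T_{f,g}` inside `End(L')`. -/
noncomputable def sFrak : Submodule ℂ (Lprime → Lprime) :=
  Submodule.span ℂ {A : Lprime → Lprime | ∃ f g : Lprime, A = TL f g}

/-!
For an alternating form `ω`, the operators `T_{f,g} = ω(f,·) g + ω(g,·) f` satisfy
`[T_{f,g}, T_{h,k}] = ω(f,k) T_{g,h} + ω(g,k) T_{f,h} + ω(f,h) T_{g,k} + ω(g,h) T_{f,k}`,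
so their span is closed under commutators. If `p, q` are orthogonal to `x` and `y`, the same
formula gives `[T_{x,p}, T_{y,q}] - [T_{x,q}, T_{y,p}] = 2 ω(p,q) T_{x,y}`. For the residue
pairing on `L'` such a pair with `ω(p,q) ≠ 0` always exists: `p = t^c`, `q = t^{-c}` with `±c`
outside the supports of `x` and `y`. The residue pairing is alternating because
`⟨t^a, g⟩ = a g_{-a}` and `⟨f, t^b⟩ = -b f_{-b}`.
-/

namespace LinearMap

variable {K V : Type*}

section CommRing

variable [CommRing K] [AddCommGroup V] [Module K V] (ω : V →ₗ[K] V →ₗ[K] K)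

def symOp (f g : V) : Module.End K V :=
  (ω f).smulRight g + (ω g).smulRight f

@[simp]
theorem symOp_apply (f g k : V) : ω.symOp f g k = ω f k • g + ω g k • f := rfl

theorem symOp_comm (f g : V) : ω.symOp f g = ω.symOp g f :=
  add_comm _ _

def symOpSpan : Submodule K (Module.End K V) :=
  Submodule.span K {A | ∃ f g, A = ω.symOp f g}

variable {ω}

theorem symOp_mem_symOpSpan (f g : V) : ω.symOp f g ∈ ω.symOpSpan :=
  Submodule.subset_span ⟨f, g, rfl⟩

theorem symOp_commutator (hω : ω.IsAlt) (f g h k : V) :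
    ω.symOp f g * ω.symOp h k - ω.symOp h k * ω.symOp f g =
      ω f k • ω.symOp g h + ω g k • ω.symOp f h + ω f h • ω.symOp g k + ω g h • ω.symOp f k := by
  ext m
  simp only [sub_apply, Module.End.mul_apply, add_apply, smul_apply, symOp_apply, map_add,
    map_smul]
  rw [← hω.neg g h, ← hω.neg g k, ← hω.neg f h, ← hω.neg f k]
  module

theorem commutator_mem_symOpSpan (hω : ω.IsAlt) {A B : Module.End K V} (hA : A ∈ ω.symOpSpan)
    (hB : B ∈ ω.symOpSpan) : A * B - B * A ∈ ω.symOpSpan := by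
  induction hA, hB using Submodule.span_induction₂ with
  | mem_mem A B hA hB =>
    obtain ⟨f, g, rfl⟩ := hA
    obtain ⟨h, k, rfl⟩ := hB
    rw [symOp_commutator hω]
    refine add_mem (add_mem (add_mem ?_ ?_) ?_) ?_ <;>
      exact Submodule.smul_mem _ _ (symOp_mem_symOpSpan _ _)
  | zero_left => simp
  | zero_right => simp
  | add_left _ _ _ _ _ _ h₁ h₂ => convert add_mem h₁ h₂ using 1; noncomm_ring
  | add_right _ _ _ _ _ _ h₁ h₂ => convert add_mem h₁ h₂ using 1; noncomm_ring
  | smul_left r _ _ _ _ h =>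
    simpa only [smul_mul_assoc, mul_smul_comm, smul_sub] using Submodule.smul_mem _ r h
  | smul_right r _ _ _ _ h =>
    simpa only [smul_mul_assoc, mul_smul_comm, smul_sub] using Submodule.smul_mem _ r h

theorem symOp_commutator_sub_symOp_commutator (hω : ω.IsAlt) {x y p q : V} (hxp : ω x p = 0)
    (hxq : ω x q = 0) (hyp : ω y p = 0) (hyq : ω y q = 0) :
    (ω.symOp x p * ω.symOp y q - ω.symOp y q * ω.symOp x p) -
        (ω.symOp x q * ω.symOp y p - ω.symOp y p * ω.symOp x q) =
      (2 * ω p q) • ω.symOp x y := by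
  rw [symOp_commutator hω, symOp_commutator hω, ← hω.neg y p, ← hω.neg y q, ← hω.neg p q,
    symOp_comm ω q p, hxp, hxq, hyp, hyq]
  module

end CommRing

section Field

variable [Field K] [NeZero (2 : K)] [AddCommGroup V] [Module K V] {ω : V →ₗ[K] V →ₗ[K] K}

theorem symOpSpan_le_span_commutator (hω : ω.IsAlt)
    (hpair : ∀ x y : V, ∃ p q, ω x p = 0 ∧ ω x q = 0 ∧ ω y p = 0 ∧ ω y q = 0 ∧ ω p q ≠ 0) :
    ω.symOpSpan ≤
      Submodule.span K {X | ∃ A ∈ ω.symOpSpan, ∃ B ∈ ω.symOpSpan, X = A * B - B * A} := by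
  refine Submodule.span_le.2 ?_
  rintro _ ⟨x, y, rfl⟩
  obtain ⟨p, q, hxp, hxq, hyp, hyq, hpq⟩ := hpair x y
  refine (Submodule.smul_mem_iff _ (mul_ne_zero two_ne_zero hpq)).1 ?_
  rw [← symOp_commutator_sub_symOp_commutator hω hxp hxq hyp hyq]
  exact Submodule.sub_mem _
    (Submodule.subset_span ⟨_, symOp_mem_symOpSpan x p, _, symOp_mem_symOpSpan y q, rfl⟩)
    (Submodule.subset_span ⟨_, symOp_mem_symOpSpan x q, _, symOp_mem_symOpSpan y p, rfl⟩)

end Field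

end LinearMap

theorem D_eq_derivative (f : LaurentSeries ℂ) : D f = LaurentSeries.derivative ℂ f := by
  ext n
  simp [D, zsmul_eq_mul]

theorem D_coeff (f : LaurentSeries ℂ) (n : ℤ) :
    (D f).coeff n = ((n + 1 : ℤ) : ℂ) * f.coeff (n + 1) := rfl

theorem D_single (b : ℤ) (r : ℂ) : D (single b r) = single (b - 1) (b * r) := by
  simp [D_eq_derivative, zsmul_eq_mul]

noncomputable def resPairₗ : LaurentSeries ℂ →ₗ[ℂ] LaurentSeries ℂ →ₗ[ℂ] ℂ :=
  LinearMap.mk₂ ℂ resPair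
    (fun f f' g => by simp only [resPair, add_mul, coeff_add]; ring)
    (fun c f g => by
      rw [resPair, resPair, ← single_zero_mul_eq_smul, mul_assoc, single_zero_mul_eq_smul,
        coeff_smul, smul_neg])
    (fun f g g' => by simp only [resPair, D_eq_derivative, map_add, mul_add, coeff_add]; ring)
    (fun c f g => by
      rw [resPair, resPair, D_eq_derivative, D_eq_derivative, map_smul,
        ← single_zero_mul_eq_smul, mul_left_comm, single_zero_mul_eq_smul, coeff_smul,
        smul_neg])

theorem resPair_single_left (a : ℤ) (r : ℂ) (g : LaurentSeries ℂ) :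
    resPair (single a r) g = a * r * g.coeff (-a) := by
  rw [resPair, coeff_single_mul, D_coeff, show -1 - a + 1 = -a by ring]
  push_cast
  ring

theorem resPair_single_right (f : LaurentSeries ℂ) (b : ℤ) (r : ℂ) :
    resPair f (single b r) = -(b * r * f.coeff (-b)) := by
  rw [resPair, D_single, coeff_mul_single, show -1 - (b - 1) = -b by ring]
  ring

theorem sum_single_coeff_of_support_finite {f : LaurentSeries ℂ} (hf : f.support.Finite) :
    ∑ b ∈ hf.toFinset, single b (f.coeff b) = f := by
  ext n
  rw [coeff_sum, Finset.sum_eq_single n (fun b _ hbn => coeff_single_of_ne hbn.symm)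
    (fun hn => by simpa using hn), coeff_single_same]

theorem resPair_swap_of_support_finite {f : LaurentSeries ℂ} (hf : f.support.Finite)
    (g : LaurentSeries ℂ) : resPair g f = -resPair f g := by
  have hsum := sum_single_coeff_of_support_finite hf
  have hleft : resPair f g = ∑ b ∈ hf.toFinset, resPair (single b (f.coeff b)) g := by
    conv_lhs => rw [← hsum]
    exact map_sum (resPairₗ.flip g) _ _
  have hright : resPair g f = ∑ b ∈ hf.toFinset, resPair g (single b (f.coeff b)) := by
    conv_lhs => rw [← hsum]
    exact map_sum (resPairₗ g) _ _
  rw [hleft, hright, ← Finset.sum_neg_distrib]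
  refine Finset.sum_congr rfl fun b _ => ?_
  rw [resPair_single_left, resPair_single_right]

noncomputable def resForm : Lprime →ₗ[ℂ] Lprime →ₗ[ℂ] ℂ :=
  resPairₗ.compl₁₂ Lprime.subtype Lprime.subtype

theorem resForm_apply (f g : Lprime) : resForm f g = resPair f g := rfl

theorem resForm_isAlt : resForm.IsAlt :=
  fun f => self_eq_neg.1 (resPair_swap_of_support_finite f.2.2 f)

theorem single_mem_Lprime {c : ℤ} (hc : c ≠ 0) (r : ℂ) : single c r ∈ Lprime :=
  ⟨by simp [hc.symm], (Set.finite_singleton c).subset support_single_subset⟩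

theorem exists_orthogonal_hyperbolic_pair (x y : Lprime) :
    ∃ p q, resForm x p = 0 ∧ resForm x q = 0 ∧ resForm y p = 0 ∧ resForm y q = 0 ∧
      resForm p q ≠ 0 := by
  have hS := x.2.2.union y.2.2
  obtain ⟨c, hc⟩ := ((hS.union hS.neg).insert 0).exists_notMem
  simp only [Set.mem_insert_iff, Set.mem_union, Set.mem_neg, mem_support, not_or, ne_eq,
    not_not] at hc
  obtain ⟨hc0, ⟨hxc, hyc⟩, hxc', hyc'⟩ := hc
  refine ⟨⟨single c 1, single_mem_Lprime hc0 1⟩,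
    ⟨single (-c) 1, single_mem_Lprime (neg_ne_zero.2 hc0) 1⟩, ?_, ?_, ?_, ?_, ?_⟩ <;>
    simp [resForm_apply, resPair_single_right, hc0, hxc, hyc, hxc', hyc']

theorem sFrak_eq_map :
    sFrak = (LinearMap.symOpSpan (V := Lprime) resForm).map
      (LinearMap.ltoFun ℂ Lprime Lprime ℂ) := by
  rw [sFrak, LinearMap.symOpSpan, Submodule.map_span]
  refine congrArg (Submodule.span ℂ) (Set.ext fun A => ?_)
  constructor
  · rintro ⟨f, g, rfl⟩
    exact ⟨_, ⟨f, g, rfl⟩, rfl⟩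
  · rintro ⟨_, ⟨f, g, rfl⟩, rfl⟩
    exact ⟨f, g, rfl⟩

theorem comp_sub_comp_mem_sFrak {A B : Lprime → Lprime} (hA : A ∈ sFrak) (hB : B ∈ sFrak) :
    (fun k => A (B k) - B (A k)) ∈ sFrak := by
  rw [sFrak_eq_map] at hA hB ⊢
  obtain ⟨A, hA, rfl⟩ := hA
  obtain ⟨B, hB, rfl⟩ := hB
  exact ⟨_, LinearMap.commutator_mem_symOpSpan resForm_isAlt hA hB, rfl⟩

/-- the span `𝔰` of the operators `T_{f,g}` on `L'` is closed under the
commutator bracket and is perfect: `[𝔰, 𝔰] = 𝔰`, i.e. every element of `𝔰` is a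
ℂ-linear combination of commutators of elements of `𝔰`. -/
theorem sFrak_closed_and_perfect :
    (∀ A ∈ sFrak, ∀ B ∈ sFrak, (fun k => A (B k) - B (A k)) ∈ sFrak) ∧
    sFrak = Submodule.span ℂ
      {X : Lprime → Lprime | ∃ A ∈ sFrak, ∃ B ∈ sFrak,
        X = fun k => A (B k) - B (A k)} := by
  refine ⟨fun A hA B hB => comp_sub_comp_mem_sFrak hA hB, le_antisymm ?_ ?_⟩
  · rw [sFrak_eq_map]
    refine (Submodule.map_mono (LinearMap.symOpSpan_le_span_commutator (V := Lprime)
      resForm_isAlt exists_orthogonal_hyperbolic_pair)).trans ?_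
    rw [Submodule.map_span]
    refine Submodule.span_mono ?_
    rintro _ ⟨_, ⟨A, hA, B, hB, rfl⟩, rfl⟩
    exact ⟨A, Submodule.mem_map_of_mem hA, B, Submodule.mem_map_of_mem hB, rfl⟩
  · refine Submodule.span_le.2 ?_
    rintro _ ⟨A, hA, B, hB, rfl⟩
    exact comp_sub_comp_mem_sFrak hA hB
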